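/- Let p = p(n) = (1+ε)/n with ε = ε(n) → 0 and ε^3 n → ∞, and let L = L(n) = o(εn). Then for a fixed vertex v of G_{n,p}, Pr(|C_v| ≥ L) ≥ (2 + o(1))ε; equivalently, the expected number of vertices of G_{n,p} in components of size at least L is at least (2 + o(1))εn. -/

import Mathlib

open MeasureTheory ProbabilityTheory Filter

noncomputable section

instance {n : ℕ} : MeasurableSpace (SimpleGraph (Fin n)) := ⊤

/-- Bernoulli measure on `Bool` with success probability `p`. -/
def bern (p : ℝ) : Measure Bool :=
  ENNReal.ofReal p • Measure.dirac true + ENNReal.ofReal (1 - p) • Measure.dirac false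

/-- The Erdős–Rényi measure on simple graphs on `{1,…,n}`: each possible edge is present
independently with probability `p`. -/
def gnp (n : ℕ) (p : ℝ) : Measure (SimpleGraph (Fin n)) :=
  Measure.map (fun ω : Sym2 (Fin n) → Bool => SimpleGraph.fromRel (fun v w => ω s(v, w)))
    (Measure.pi fun _ : Sym2 (Fin n) => bern p)

/-- The number of vertices of the component of `v` in `G`. -/
def compSize {n : ℕ} (G : SimpleGraph (Fin n)) (v : Fin n) : ℕ :=
  Nat.card {w : Fin n // G.Reachable v w}

/-- The number `N_{[L,n]}` of vertices of `G` in components with at least `L` vertices. -/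
def numBig {n : ℕ} (G : SimpleGraph (Fin n)) (L : ℕ) : ℕ :=
  Nat.card {v : Fin n // L ≤ compSize G v}

namespace Stmt14Aux

variable {n : ℕ}

abbrev Cube (n : ℕ) := Sym2 (Fin n) → Bool

/-- weight of a single coordinate -/
def wt (p : ℝ) (b : Bool) : ℝ := if b then p else 1 - p

/-- weight of a configuration -/
def W (p : ℝ) (ω : Cube n) : ℝ := ∏ e : Sym2 (Fin n), wt p (ω e)

/-- the graph given by `ω`, with all edges touching `U` removed -/
def mask (ω : Cube n) (U : Finset (Fin n)) : SimpleGraph (Fin n) :=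
  SimpleGraph.fromRel (fun x y => ω s(x, y) = true ∧ x ∉ U ∧ y ∉ U)

open Classical in
/-- the set of vertices reachable from `A` in `mask ω U` -/
def RS (ω : Cube n) (U A : Finset (Fin n)) : Finset (Fin n) :=
  Finset.univ.filter (fun x => ∃ a ∈ A, (mask ω U).Reachable a x)

open Classical in
/-- fresh neighbours of `a` -/
def NfF (ω : Cube n) (a : Fin n) (U A : Finset (Fin n)) : Finset (Fin n) :=
  (Finset.univ \ (U ∪ A)).filter (fun w => ω s(a, w) = true)

open Classical in
/-- the bad event: fewer than `A.card + r` vertices reachable from `A` -/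
def badF (U A : Finset (Fin n)) (r : ℕ) : Finset (Cube n) :=
  Finset.univ.filter (fun ω => (RS ω U A).card < A.card + r)

lemma mask_adj {ω : Cube n} {U : Finset (Fin n)} {x y : Fin n} :
    (mask ω U).Adj x y ↔ x ≠ y ∧ ω s(x, y) = true ∧ x ∉ U ∧ y ∉ U := by
  unfold mask
  rw [SimpleGraph.fromRel_adj]
  constructor
  · rintro ⟨hne, h | ⟨hw, hy, hx⟩⟩
    · exact ⟨hne, h⟩
    · rw [Sym2.eq_swap] at hw
      exact ⟨hne, hw, hx, hy⟩
  · rintro ⟨hne, h⟩; exact ⟨hne, Or.inl h⟩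

lemma mem_RS {ω : Cube n} {U A : Finset (Fin n)} {x : Fin n} :
    x ∈ RS ω U A ↔ ∃ a ∈ A, (mask ω U).Reachable a x := by
  classical
  simp [RS]

lemma subset_RS {ω : Cube n} {U A : Finset (Fin n)} : A ⊆ RS ω U A := by
  intro a ha
  exact mem_RS.mpr ⟨a, ha, SimpleGraph.Reachable.refl a⟩

lemma mask_mono {ω : Cube n} {U U' : Finset (Fin n)} (h : U ⊆ U') :
    mask ω U' ≤ mask ω U := by
  intro x y hxy
  rw [mask_adj] at hxy ⊢
  exact ⟨hxy.1, hxy.2.1, fun hx => hxy.2.2.1 (h hx), fun hy => hxy.2.2.2 (h hy)⟩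

lemma walk_end_not_mem {ω : Cube n} {U : Finset (Fin n)} :
    ∀ {u x : Fin n}, (mask ω U).Walk u x → u ∉ U → x ∉ U := by
  intro u x w
  induction w with
  | nil => exact id
  | cons h w ih =>
      intro _
      exact ih ((mask_adj.mp h).2.2.2)

lemma RS_disj_U {ω : Cube n} {U A : Finset (Fin n)} (hAU : Disjoint A U) {x : Fin n}
    (hx : x ∈ RS ω U A) : x ∉ U := by
  obtain ⟨a, ha, hr⟩ := mem_RS.mp hx
  obtain ⟨w⟩ := hr
  exact walk_end_not_mem w (Finset.disjoint_left.mp hAU ha)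

lemma RS_step {ω : Cube n} {U A : Finset (Fin n)} {a : Fin n} (ha : a ∈ A)
    (hAU : Disjoint A U) :
    RS ω U A = insert a (RS ω (insert a U) (A.erase a ∪ NfF ω a U A)) := by
  classical
  set U' := insert a U with hU'
  set A' := A.erase a ∪ NfF ω a U A with hA'
  have haU : a ∉ U := Finset.disjoint_left.mp hAU ha
  apply Finset.Subset.antisymm
  · -- ⊆
    intro x hx
    obtain ⟨b, hb, hr⟩ := mem_RS.mp hx
    obtain ⟨w⟩ := hr
    -- walk induction: carry `u ∈ insert a (RS ω U' A')` along the walk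
    have key : ∀ {u z : Fin n}, (mask ω U).Walk u z →
        u ∈ insert a (RS ω U' A') → z ∈ insert a (RS ω U' A') := by
      intro u z w
      induction w with
      | nil => exact id
      | @cons u c z h w ih =>
          intro hu
          apply ih
          -- show c ∈ insert a (RS ω U' A')
          rcases Finset.mem_insert.mp hu with rfl | hu'
          · -- u = a
            obtain ⟨hne, hω, hxU, hyU⟩ := mask_adj.mp h
            have hcA' : c ∈ A' := by
              by_cases hcA : c ∈ A
              · exact Finset.mem_union_left _ (Finset.mem_erase.mpr ⟨fun h' => hne h'.symm, hcA⟩)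
              · refine Finset.mem_union_right _ ?_
                rw [NfF, Finset.mem_filter]
                exact ⟨Finset.mem_sdiff.mpr ⟨Finset.mem_univ _,
                  fun hc => (Finset.mem_union.mp hc).elim hyU hcA⟩, hω⟩
            exact Finset.mem_insert_of_mem
              (mem_RS.mpr ⟨c, hcA', SimpleGraph.Reachable.refl c⟩)
          · by_cases hca : c = a
            · exact hca ▸ Finset.mem_insert_self _ _
            · obtain ⟨b', hb', hr'⟩ := mem_RS.mp hu'
              obtain ⟨hne, hω, hxU, hyU⟩ := mask_adj.mp h
              have hdisj' : Disjoint A' U' := by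
                rw [hA', hU', Finset.disjoint_union_left]
                constructor
                · rw [Finset.disjoint_left]
                  intro z hz hz'
                  rcases Finset.mem_insert.mp hz' with rfl | hz''
                  · exact (Finset.mem_erase.mp hz).1 rfl
                  · exact Finset.disjoint_left.mp hAU (Finset.mem_of_mem_erase hz) hz''
                · rw [Finset.disjoint_left]
                  intro z hz hz'
                  rw [NfF, Finset.mem_filter, Finset.mem_sdiff] at hz
                  rcases Finset.mem_insert.mp hz' with rfl | hz''
                  · exact hz.1.2 (Finset.mem_union_right _ ha)
                  · exact hz.1.2 (Finset.mem_union_left _ hz'')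
              have hua : u ≠ a := by
                rintro rfl
                exact RS_disj_U hdisj' hu' (Finset.mem_insert_self _ U)
              have hadj' : (mask ω U').Adj u c := by
                rw [mask_adj]
                refine ⟨hne, hω, ?_, ?_⟩
                · rw [hU', Finset.mem_insert]; rintro (h' | h') <;> [exact hua h'; exact hxU h']
                · rw [hU', Finset.mem_insert]; rintro (h' | h') <;> [exact hca h'; exact hyU h']
              exact Finset.mem_insert_of_mem
                (mem_RS.mpr ⟨b', hb', hr'.trans hadj'.reachable⟩)
    refine key w ?_
    rcases eq_or_ne b a with rfl | hba
    · exact Finset.mem_insert_self _ _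
    · exact Finset.mem_insert_of_mem (mem_RS.mpr
        ⟨b, Finset.mem_union_left _ (Finset.mem_erase.mpr ⟨hba, hb⟩),
         SimpleGraph.Reachable.refl b⟩)
  · -- ⊇
    intro x hx
    rcases Finset.mem_insert.mp hx with rfl | hx'
    · exact subset_RS ha
    · obtain ⟨b, hb, hr⟩ := mem_RS.mp hx'
      have hr2 : (mask ω U).Reachable b x := hr.mono (mask_mono (Finset.subset_insert a U))
      rcases Finset.mem_union.mp hb with hb' | hb'
      · exact mem_RS.mpr ⟨b, Finset.mem_of_mem_erase hb', hr2⟩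
      · -- b fresh neighbour of a
        rw [NfF, Finset.mem_filter, Finset.mem_sdiff] at hb'
        obtain ⟨⟨_, hbUA⟩, hω⟩ := hb'
        have hbU : b ∉ U := fun h => hbUA (Finset.mem_union_left _ h)
        have hbA : b ∉ A := fun h => hbUA (Finset.mem_union_right _ h)
        have hadj : (mask ω U).Adj a b := by
          rw [mask_adj]
          exact ⟨fun h => hbA (h ▸ ha), hω, haU, hbU⟩
        exact mem_RS.mpr ⟨a, ha, hadj.reachable.trans hr2⟩


lemma disj_step {ω : Cube n} {U A : Finset (Fin n)} {a : Fin n} (ha : a ∈ A)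
    (hAU : Disjoint A U) :
    Disjoint (A.erase a ∪ NfF ω a U A) (insert a U) := by
  classical
  rw [Finset.disjoint_union_left]
  constructor
  · rw [Finset.disjoint_left]
    intro z hz hz'
    rcases Finset.mem_insert.mp hz' with rfl | hz''
    · exact (Finset.mem_erase.mp hz).1 rfl
    · exact Finset.disjoint_left.mp hAU (Finset.mem_of_mem_erase hz) hz''
  · rw [Finset.disjoint_left]
    intro z hz hz'
    rw [NfF, Finset.mem_filter, Finset.mem_sdiff] at hz
    rcases Finset.mem_insert.mp hz' with rfl | hz''
    · exact hz.1.2 (Finset.mem_union_right _ ha)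
    · exact hz.1.2 (Finset.mem_union_left _ hz'')

lemma RS_card_step {ω : Cube n} {U A : Finset (Fin n)} {a : Fin n} (ha : a ∈ A)
    (hAU : Disjoint A U) :
    (RS ω U A).card = (RS ω (insert a U) (A.erase a ∪ NfF ω a U A)).card + 1 := by
  classical
  rw [RS_step ha hAU]
  rw [Finset.card_insert_of_notMem]
  intro hmem
  exact RS_disj_U (disj_step ha hAU) hmem (Finset.mem_insert_self _ _)

lemma mask_update {ω : Cube n} {U : Finset (Fin n)} {a w : Fin n} (haU : a ∈ U)
    (c : Bool) : mask (Function.update ω s(a, w) c) U = mask ω U := by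
  classical
  ext x y
  rw [mask_adj, mask_adj]
  constructor <;> rintro ⟨h1, h2, h3, h4⟩ <;> refine ⟨h1, ?_, h3, h4⟩
  · rwa [Function.update_of_ne] at h2
    intro hexy
    have : a ∈ s(x, y) := hexy ▸ Sym2.mem_mk_left a w
    rcases Sym2.mem_iff.mp this with rfl | rfl
    · exact h3 haU
    · exact h4 haU
  · rw [Function.update_of_ne]
    · exact h2
    · intro hexy
      have : a ∈ s(x, y) := hexy ▸ Sym2.mem_mk_left a w
      rcases Sym2.mem_iff.mp this with rfl | rfl
      · exact h3 haU
      · exact h4 haU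

lemma RS_update {ω : Cube n} {U A : Finset (Fin n)} {a w : Fin n} (haU : a ∈ U)
    (c : Bool) : RS (Function.update ω s(a, w) c) U A = RS ω U A := by
  unfold RS
  rw [mask_update haU c]

lemma badF_update {ω : Cube n} {U A : Finset (Fin n)} {r : ℕ} {a w : Fin n} (haU : a ∈ U)
    (c : Bool) : ω ∈ badF U A r ↔ Function.update ω s(a, w) c ∈ badF U A r := by
  classical
  unfold badF
  simp only [Finset.mem_filter, Finset.mem_univ, true_and]
  rw [RS_update haU c]


lemma wt_nonneg {p : ℝ} (hp0 : 0 ≤ p) (hp1 : p ≤ 1) (b : Bool) : 0 ≤ wt p b := by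
  cases b <;> simp [wt] <;> linarith

lemma W_nonneg {p : ℝ} (hp0 : 0 ≤ p) (hp1 : p ≤ 1) (ω : Cube n) : 0 ≤ W p ω :=
  Finset.prod_nonneg fun e _ => wt_nonneg hp0 hp1 _

lemma sum_W_univ (p : ℝ) : ∑ ω : Cube n, W p ω = 1 := by
  classical
  have h := Finset.prod_univ_sum (fun _ : Sym2 (Fin n) => (Finset.univ : Finset Bool))
    (fun e b => wt p b)
  rw [Fintype.piFinset_univ] at h
  have h2 : ∀ e : Sym2 (Fin n), ∑ b : Bool, wt p b = 1 := by
    intro e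
    simp [wt]
  calc ∑ ω : Cube n, W p ω = ∑ ω : Cube n, ∏ e : Sym2 (Fin n), wt p (ω e) := rfl
    _ = ∏ e : Sym2 (Fin n), ∑ b : Bool, wt p b := h.symm
    _ = ∏ e : Sym2 (Fin n), (1 : ℝ) := by
        exact Finset.prod_congr rfl fun e _ => h2 e
    _ = 1 := Finset.prod_const_one

lemma W_eq_wt_mul (p : ℝ) (e0 : Sym2 (Fin n)) (ω : Cube n) :
    W p ω = wt p (ω e0) * ∏ e ∈ Finset.univ.erase e0, wt p (ω e) := by
  classical
  rw [mul_comm, W, Finset.prod_erase_mul _ _ (Finset.mem_univ e0)]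

lemma sum_filter_coord (p : ℝ) (e0 : Sym2 (Fin n)) (D : Finset (Cube n))
    (hD : ∀ ω c, ω ∈ D ↔ Function.update ω e0 c ∈ D) (c : Bool) :
    ∑ ω ∈ D.filter (fun ω => ω e0 = c), W p ω = wt p c * ∑ ω ∈ D, W p ω := by
  classical
  set R : Bool → ℝ := fun b => ∑ ω ∈ D.filter (fun ω => ω e0 = b),
    ∏ e ∈ Finset.univ.erase e0, wt p (ω e) with hR
  have hsum : ∀ b, ∑ ω ∈ D.filter (fun ω => ω e0 = b), W p ω = wt p b * R b := by
    intro b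
    rw [hR, Finset.mul_sum]
    apply Finset.sum_congr rfl
    intro ω hω
    have hb : ω e0 = b := (Finset.mem_filter.mp hω).2
    rw [W_eq_wt_mul p e0, hb]
  have hReq : R true = R false := by
    rw [hR]
    apply Finset.sum_nbij' (fun ω => Function.update ω e0 false)
      (fun ω => Function.update ω e0 true)
    · intro ω hω
      rw [Finset.mem_filter] at hω ⊢
      exact ⟨(hD ω false).mp hω.1, Function.update_self _ _ _⟩
    · intro ω hω
      rw [Finset.mem_filter] at hω ⊢
      exact ⟨(hD ω true).mp hω.1, Function.update_self _ _ _⟩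
    · intro ω hω
      have hb : ω e0 = true := (Finset.mem_filter.mp hω).2
      funext e
      by_cases he : e = e0
      · subst he; rw [Function.update_self, ← hb]
      · rw [Function.update_of_ne he, Function.update_of_ne he]
    · intro ω hω
      have hb : ω e0 = false := (Finset.mem_filter.mp hω).2
      funext e
      by_cases he : e = e0
      · subst he; rw [Function.update_self, ← hb]
      · rw [Function.update_of_ne he, Function.update_of_ne he]
    · intro ω hω
      apply Finset.prod_congr rfl
      intro e he
      rw [Function.update_of_ne (Finset.mem_erase.mp he).1]
  have hsplit : ∑ ω ∈ D, W p ω = R true * p + R false * (1 - p) := by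
    have := Finset.sum_filter_add_sum_filter_not D (fun ω => ω e0 = true) (W p)
    rw [← this, hsum true]
    have hf : D.filter (fun ω => ¬ω e0 = true) = D.filter (fun ω => ω e0 = false) := by
      apply Finset.filter_congr
      intro ω _
      simp
    rw [hf, hsum false]
    simp [wt]
    ring
  have h1 : wt p false = 1 - p := by simp [wt]
  have h2 : wt p true = p := by simp [wt]
  cases c
  · rw [hsum false, hsplit, ← hReq, h1]
    ring
  · rw [hsum true, hsplit, hReq, h2]
    ring


lemma sum_filter_coords (p : ℝ) (a : Fin n) (b : Fin n → Bool) :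
    ∀ (Wf : Finset (Fin n)), a ∉ Wf → ∀ (D : Finset (Cube n)),
    (∀ (ω : Cube n) (w : Fin n) (c : Bool), w ∈ Wf →
      (ω ∈ D ↔ Function.update ω s(a, w) c ∈ D)) →
    ∑ ω ∈ D.filter (fun ω => ∀ w ∈ Wf, ω s(a, w) = b w), W p ω
      = (∏ w ∈ Wf, wt p (b w)) * ∑ ω ∈ D, W p ω := by
  classical
  intro Wf
  induction Wf using Finset.induction with
  | empty =>
      intro _ D _
      simp
  | @insert w0 Wf' hw0 ih =>
      intro ha D hD
      have haw0 : a ≠ w0 := fun h => ha (h ▸ Finset.mem_insert_self w0 Wf')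
      have haWf' : a ∉ Wf' := fun h => ha (Finset.mem_insert_of_mem h)
      set D' := D.filter (fun ω => ∀ w ∈ Wf', ω s(a, w) = b w) with hD'def
      have hstep : D.filter (fun ω => ∀ w ∈ insert w0 Wf', ω s(a, w) = b w)
          = D'.filter (fun ω => ω s(a, w0) = b w0) := by
        rw [hD'def, Finset.filter_filter]
        apply Finset.filter_congr
        intro ω _
        simp only [Finset.forall_mem_insert]
        constructor
        · rintro ⟨h1, h2⟩; exact ⟨h2, h1⟩
        · rintro ⟨h1, h2⟩; exact ⟨h2, h1⟩
      rw [hstep]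
      have hD'inv : ∀ (ω : Cube n) (c : Bool),
          ω ∈ D' ↔ Function.update ω s(a, w0) c ∈ D' := by
        intro ω c
        rw [hD'def, Finset.mem_filter, Finset.mem_filter]
        constructor
        · rintro ⟨h1, h2⟩
          refine ⟨(hD ω w0 c (Finset.mem_insert_self _ _)).mp h1, ?_⟩
          intro w hw
          rw [Function.update_of_ne]
          · exact h2 w hw
          · intro hcoord
            have : w = w0 := by
              have h' := Sym2.eq_iff.mp hcoord
              rcases h' with ⟨_, h⟩ | ⟨h1', h2'⟩
              · exact h
              · exact absurd h1' haw0
            exact hw0 (this ▸ hw)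
        · rintro ⟨h1, h2⟩
          have hmem : ω ∈ D := by
            have := (hD (Function.update ω s(a, w0) c) w0 (ω s(a, w0))
              (Finset.mem_insert_self _ _)).mp h1
            rwa [Function.update_idem, Function.update_eq_self] at this
          refine ⟨hmem, ?_⟩
          intro w hw
          have hne : s(a, w) ≠ s(a, w0) := by
            intro hcoord
            have : w = w0 := by
              have h' := Sym2.eq_iff.mp hcoord
              rcases h' with ⟨_, h⟩ | ⟨h1', h2'⟩
              · exact h
              · exact absurd h1' haw0
            exact hw0 (this ▸ hw)
          have := h2 w hw
          rwa [Function.update_of_ne hne] at this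
      rw [sum_filter_coord p s(a, w0) D' hD'inv (b w0)]
      rw [ih haWf' D (fun ω w c hw => hD ω w c (Finset.mem_insert_of_mem hw))]
      rw [Finset.prod_insert hw0]
      ring


lemma mem_badF {ω : Cube n} {U A : Finset (Fin n)} {r : ℕ} :
    ω ∈ badF U A r ↔ (RS ω U A).card < A.card + r := by
  classical
  simp [badF]

lemma badF_r_zero {U A : Finset (Fin n)} : badF U A 0 = (∅ : Finset (Cube n)) := by
  classical
  rw [Finset.eq_empty_iff_forall_notMem]
  intro ω h
  rw [mem_badF] at h
  have := Finset.card_le_card (subset_RS (ω := ω) (U := U) (A := A))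
  omega

lemma NfF_eq_iff {ω : Cube n} {U A : Finset (Fin n)} {a : Fin n} {S : Finset (Fin n)}
    (hS : S ⊆ Finset.univ \ (U ∪ A)) :
    NfF ω a U A = S ↔ ∀ w ∈ Finset.univ \ (U ∪ A),
      ω s(a, w) = (if w ∈ S then true else false) := by
  classical
  constructor
  · intro h w hw
    by_cases hwS : w ∈ S
    · simp only [hwS, if_true]
      have : w ∈ NfF ω a U A := h ▸ hwS
      exact (Finset.mem_filter.mp this).2
    · simp only [hwS, if_false]
      by_contra hne
      have : ω s(a, w) = true := by
        cases hb : ω s(a, w)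
        · exact absurd hb hne
        · rfl
      exact hwS (h ▸ (Finset.mem_filter.mpr ⟨hw, this⟩ : w ∈ NfF ω a U A))
  · intro h
    ext w
    rw [NfF, Finset.mem_filter]
    constructor
    · rintro ⟨hw, hω⟩
      have := h w hw
      rw [hω] at this
      by_contra hwS
      simp [hwS] at this
    · intro hwS
      have hw : w ∈ Finset.univ \ (U ∪ A) := hS hwS
      refine ⟨hw, ?_⟩
      have := h w hw
      simp [hwS] at this
      exact this

lemma master (p y : ℝ) (hp0 : 0 ≤ p) (hp1 : p ≤ 1) (hy0 : 0 ≤ y) (hy1 : y ≤ 1)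
    (B : ℕ) (hy : ∀ m : ℕ, n - B ≤ m → ((1 - p) + p * y) ^ m ≤ y) :
    ∀ (M r : ℕ) (A U : Finset (Fin n)), r * (n + 1) + A.card ≤ M → Disjoint A U →
      A.card + U.card + r = B →
      ∑ ω ∈ badF U A r, W p ω ≤ y ^ A.card := by
  classical
  intro M
  induction M with
  | zero =>
      intro r A U hM hAU hB
      have h0 : r * (n + 1) = 0 := by omega
      have hr : r = 0 := by
        rcases Nat.mul_eq_zero.mp h0 with h | h
        · exact h
        · omega
      subst hr
      rw [badF_r_zero, Finset.sum_empty]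
      exact pow_nonneg hy0 _
  | succ M ih =>
      intro r A U hM hAU hB
      rcases Nat.eq_zero_or_pos r with rfl | hr
      · rw [badF_r_zero, Finset.sum_empty]
        exact pow_nonneg hy0 _
      rcases Finset.eq_empty_or_nonempty A with rfl | ⟨a, ha⟩
      · rw [Finset.card_empty, pow_zero, ← sum_W_univ (n := n) p]
        apply Finset.sum_le_sum_of_subset_of_nonneg (Finset.filter_subset _ _)
        intro ω _ _
        exact W_nonneg hp0 hp1 ω
      -- main case
      set U' := insert a U with hU'def
      set Wf := Finset.univ \ (U ∪ A) with hWfdef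
      have haA : a ∈ A := ha
      have haWf : a ∉ Wf := by
        rw [hWfdef, Finset.mem_sdiff]
        intro h
        exact h.2 (Finset.mem_union_right _ haA)
      have hcardA : 1 ≤ A.card := Finset.card_pos.mpr ⟨a, ha⟩
      have hWfcard : Wf.card = n - (U.card + A.card) := by
        rw [hWfdef, Finset.card_sdiff_of_subset (Finset.subset_univ _), Finset.card_univ,
          Fintype.card_fin, Finset.card_union_of_disjoint hAU.symm]
      -- partition according to the fresh neighbourhood of a
      have hpart : ∑ ω ∈ badF U A r, W p ω
          = ∑ S ∈ Wf.powerset,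
              ∑ ω ∈ (badF U A r).filter (fun ω => NfF ω a U A = S), W p ω := by
        rw [Finset.sum_fiberwise_eq_sum_filter]
        have : (badF U A r).filter (fun ω => NfF ω a U A ∈ Wf.powerset) = badF U A r := by
          apply Finset.filter_true_of_mem
          intro ω _
          rw [Finset.mem_powerset, hWfdef]
          exact Finset.filter_subset _ _
        rw [this]
      have hterm : ∀ S ∈ Wf.powerset,
          ∑ ω ∈ (badF U A r).filter (fun ω => NfF ω a U A = S), W p ω
            ≤ (∏ w ∈ Wf, wt p (if w ∈ S then true else false))
                * y ^ (A.card - 1 + S.card) := by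
        intro S hS
        have hSWf : S ⊆ Wf := Finset.mem_powerset.mp hS
        have hprodnn : 0 ≤ ∏ w ∈ Wf, wt p (if w ∈ S then true else false) :=
          Finset.prod_nonneg fun w _ => wt_nonneg hp0 hp1 _
        set A' := A.erase a ∪ S with hA'def
        have hdisjAS : Disjoint (A.erase a) S := by
          rw [Finset.disjoint_right]
          intro z hz hz'
          have := hSWf hz
          rw [hWfdef, Finset.mem_sdiff] at this
          exact this.2 (Finset.mem_union_right _ (Finset.mem_of_mem_erase hz'))
        have hA'card : A'.card = A.card - 1 + S.card := by
          rw [hA'def, Finset.card_union_of_disjoint hdisjAS, Finset.card_erase_of_mem haA]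
        have hdisj' : Disjoint A' U' := by
          rw [hA'def, hU'def]
          have h1 : (NfF (fun _ => false) a U A : Finset (Fin n)) = ∅ := by
            classical
            rw [Finset.eq_empty_iff_forall_notMem]
            intro w hw
            rw [NfF, Finset.mem_filter] at hw
            exact absurd hw.2 (by simp)
          -- instead prove directly
          rw [Finset.disjoint_union_left]
          constructor
          · rw [Finset.disjoint_left]
            intro z hz hz'
            rcases Finset.mem_insert.mp hz' with rfl | hz''
            · exact (Finset.mem_erase.mp hz).1 rfl
            · exact Finset.disjoint_left.mp hAU (Finset.mem_of_mem_erase hz) hz''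
          · rw [Finset.disjoint_left]
            intro z hz hz'
            have hzWf := hSWf hz
            rw [hWfdef, Finset.mem_sdiff] at hzWf
            rcases Finset.mem_insert.mp hz' with rfl | hz''
            · exact hzWf.2 (Finset.mem_union_right _ haA)
            · exact hzWf.2 (Finset.mem_union_left _ hz'')
        by_cases hSr : r ≤ S.card
        · -- the fiber is empty
          have hempty : (badF U A r).filter (fun ω => NfF ω a U A = S) = ∅ := by
            rw [Finset.eq_empty_iff_forall_notMem]
            intro ω hω
            rw [Finset.mem_filter, mem_badF] at hω
            obtain ⟨hbad, hNf⟩ := hω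
            have hcard := RS_card_step (ω := ω) haA hAU
            rw [hNf, ← hU'def, ← hA'def] at hcard
            have hsub : A'.card ≤ (RS ω U' A').card := Finset.card_le_card subset_RS
            omega
          rw [hempty, Finset.sum_empty]
          exact mul_nonneg hprodnn (pow_nonneg hy0 _)
        · push_neg at hSr
          set r' := r - S.card with hr'def
          have hfilter_eq : (badF U A r).filter (fun ω => NfF ω a U A = S)
              = (badF U' A' r').filter
                  (fun ω => ∀ w ∈ Wf, ω s(a, w) = (if w ∈ S then true else false)) := by
            ext ω
            rw [Finset.mem_filter, Finset.mem_filter, mem_badF, mem_badF]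
            constructor
            · rintro ⟨hbad, hNf⟩
              have hfib := (NfF_eq_iff (ω := ω) (a := a) (hWfdef ▸ hSWf)).mp hNf
              refine ⟨?_, fun w hw => hfib w (hWfdef ▸ hw)⟩
              have hcard := RS_card_step (ω := ω) haA hAU
              rw [hNf, ← hU'def, ← hA'def] at hcard
              omega
            · rintro ⟨hbad, hfib⟩
              have hNf : NfF ω a U A = S :=
                (NfF_eq_iff (ω := ω) (a := a) (hWfdef ▸ hSWf)).mpr
                  (fun w hw => hfib w (hWfdef ▸ hw))
              refine ⟨?_, hNf⟩
              have hcard := RS_card_step (ω := ω) haA hAU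
              rw [hNf, ← hU'def, ← hA'def] at hcard
              omega
          rw [hfilter_eq]
          rw [sum_filter_coords p a (fun w => if w ∈ S then true else false) Wf haWf
            (badF U' A' r')
            (fun ω w c hw => badF_update (Finset.mem_insert_self a U) c)]
          have hIH : ∑ ω ∈ badF U' A' r', W p ω ≤ y ^ A'.card := by
            apply ih r' A' U'
            · have hAcn : A'.card ≤ n := by
                have := Finset.card_le_univ A'
                simp only [Finset.card_univ, Fintype.card_fin] at this
                exact this
              rcases Nat.eq_zero_or_pos S.card with hS0 | hSpos
              · have hrr : r' = r := by omega
                rw [hrr]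
                have : A'.card < A.card := by omega
                omega
              · have hle : r' + 1 ≤ r := by omega
                have h1 : r' * (n + 1) + (n + 1) ≤ r * (n + 1) := by
                  calc r' * (n + 1) + (n + 1) = (r' + 1) * (n + 1) := by ring
                    _ ≤ r * (n + 1) := Nat.mul_le_mul_right _ hle
                omega
            · exact hdisj'
            · rw [hA'card, hU'def, Finset.card_insert_of_notMem
                (Finset.disjoint_left.mp hAU haA)]
              omega
          calc (∏ w ∈ Wf, wt p (if w ∈ S then true else false))
                * ∑ ω ∈ badF U' A' r', W p ω
              ≤ (∏ w ∈ Wf, wt p (if w ∈ S then true else false)) * y ^ A'.card :=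
                mul_le_mul_of_nonneg_left hIH hprodnn
            _ = (∏ w ∈ Wf, wt p (if w ∈ S then true else false))
                * y ^ (A.card - 1 + S.card) := by rw [hA'card]
      -- now sum the bound over S
      have hsum2 : ∑ S ∈ Wf.powerset,
          (∏ w ∈ Wf, wt p (if w ∈ S then true else false)) * y ^ (A.card - 1 + S.card)
          = y ^ (A.card - 1) * ((p * y) + (1 - p)) ^ Wf.card := by
        have hexp : ∀ S ∈ Wf.powerset,
            (∏ w ∈ Wf, wt p (if w ∈ S then true else false)) * y ^ (A.card - 1 + S.card)
            = y ^ (A.card - 1) * ((∏ w ∈ S, (p * y)) * ∏ w ∈ Wf \ S, (1 - p)) := by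
          intro S hS
          have hSWf : S ⊆ Wf := Finset.mem_powerset.mp hS
          have hp1' : ∏ w ∈ Wf, wt p (if w ∈ S then true else false)
              = (∏ w ∈ Wf \ S, (1 - p)) * ∏ w ∈ S, p := by
            rw [← Finset.prod_sdiff hSWf]
            congr 1
            · apply Finset.prod_congr rfl
              intro w hw
              have : w ∉ S := (Finset.mem_sdiff.mp hw).2
              simp [wt, this]
            · apply Finset.prod_congr rfl
              intro w hw
              simp [wt, hw]
          rw [hp1', Finset.prod_const, Finset.prod_const, Finset.prod_const,
            pow_add, mul_pow]
          ring
        rw [Finset.sum_congr rfl hexp, ← Finset.mul_sum, ← Finset.prod_add,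
          Finset.prod_const]
      have hfinal : ((p * y) + (1 - p)) ^ Wf.card ≤ y := by
        have h1 : (1 - p) + p * y = (p * y) + (1 - p) := by ring
        rw [← h1]
        apply hy
        omega
      calc ∑ ω ∈ badF U A r, W p ω
          = ∑ S ∈ Wf.powerset,
              ∑ ω ∈ (badF U A r).filter (fun ω => NfF ω a U A = S), W p ω := hpart
        _ ≤ ∑ S ∈ Wf.powerset,
              (∏ w ∈ Wf, wt p (if w ∈ S then true else false))
                * y ^ (A.card - 1 + S.card) := Finset.sum_le_sum hterm
        _ = y ^ (A.card - 1) * ((p * y) + (1 - p)) ^ Wf.card := hsum2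
        _ ≤ y ^ (A.card - 1) * y :=
            mul_le_mul_of_nonneg_left hfinal (pow_nonneg hy0 _)
        _ = y ^ A.card := by
            rw [← pow_succ]
            congr 1
            omega


/-! ### Measure-theoretic bridge -/

lemma measurableSet_cube (s : Set (Cube n)) : MeasurableSet s := by
  have hsing : ∀ ω : Cube n, MeasurableSet ({ω} : Set (Cube n)) := by
    intro ω
    have h : ({ω} : Set (Cube n)) = ⋂ e : Sym2 (Fin n), (fun f : Cube n => f e) ⁻¹' {ω e} := by
      ext f
      simp only [Set.mem_singleton_iff, Set.mem_iInter, Set.mem_preimage, funext_iff]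
    rw [h]
    exact MeasurableSet.iInter fun e => measurable_pi_apply e (measurableSet_singleton (ω e))
  have h2 : s = ⋃ ω ∈ s, {ω} := by simp
  rw [h2]
  exact MeasurableSet.biUnion (Set.to_countable s) fun ω _ => hsing ω

lemma bern_apply_singleton (p : ℝ) (b : Bool) :
    bern p {b} = ENNReal.ofReal (wt p b) := by
  rw [bern, Measure.add_apply, Measure.smul_apply, Measure.smul_apply,
    Measure.dirac_apply' _ (measurableSet_singleton b),
    Measure.dirac_apply' _ (measurableSet_singleton b)]
  cases b <;> simp [wt]

instance bern_finite (p : ℝ) : IsFiniteMeasure (bern p) := by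
  constructor
  rw [bern, Measure.add_apply, Measure.smul_apply, Measure.smul_apply]
  have h1 : Measure.dirac true (Set.univ : Set Bool) = 1 := by simp
  have h2 : Measure.dirac false (Set.univ : Set Bool) = 1 := by simp
  rw [h1, h2]
  simp only [smul_eq_mul, mul_one]
  exact ENNReal.add_lt_top.mpr ⟨ENNReal.ofReal_lt_top, ENNReal.ofReal_lt_top⟩

lemma pi_singleton {p : ℝ} (hp0 : 0 ≤ p) (hp1 : p ≤ 1) (ω : Cube n) :
    Measure.pi (fun _ : Sym2 (Fin n) => bern p) {ω} = ENNReal.ofReal (W p ω) := by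
  have h : ({ω} : Set (Cube n)) = Set.univ.pi (fun e => {ω e}) := by
    ext f
    simp only [Set.mem_singleton_iff, Set.mem_pi, Set.mem_univ, forall_true_left,
      Set.mem_singleton_iff, funext_iff]
  rw [h, Measure.pi_pi, W,
    ENNReal.ofReal_prod_of_nonneg (fun e _ => wt_nonneg hp0 hp1 (ω e))]
  exact Finset.prod_congr rfl fun e _ => bern_apply_singleton p (ω e)

lemma pi_finset_apply {p : ℝ} (hp0 : 0 ≤ p) (hp1 : p ≤ 1) (T : Finset (Cube n)) :
    Measure.pi (fun _ : Sym2 (Fin n) => bern p) ↑T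
      = ENNReal.ofReal (∑ ω ∈ T, W p ω) := by
  have h : (↑T : Set (Cube n)) = ⋃ ω ∈ T, {ω} := by
    ext x
    simp
  rw [h, measure_biUnion_finset ?_ (fun b _ => measurableSet_cube _)]
  · rw [ENNReal.ofReal_sum_of_nonneg (fun ω _ => W_nonneg hp0 hp1 ω)]
    exact Finset.sum_congr rfl fun ω _ => pi_singleton hp0 hp1 ω
  · intro x _ y _ hxy
    simp only [Function.onFun, Set.disjoint_singleton_left, Set.mem_singleton_iff]
    exact hxy

lemma gnp_apply (p : ℝ) (Sset : Set (SimpleGraph (Fin n))) :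
    gnp n p Sset = Measure.pi (fun _ : Sym2 (Fin n) => bern p)
      ((fun ω : Cube n => SimpleGraph.fromRel (fun v w => ω s(v, w))) ⁻¹' Sset) := by
  rw [gnp, Measure.map_apply (fun s _ => measurableSet_cube _)
    MeasurableSpace.measurableSet_top]

lemma mask_empty (ω : Cube n) :
    mask ω (∅ : Finset (Fin n)) = SimpleGraph.fromRel (fun v w => ω s(v, w)) := by
  ext x y
  rw [mask_adj, SimpleGraph.fromRel_adj]
  constructor
  · rintro ⟨h1, h2, _, _⟩
    exact ⟨h1, Or.inl h2⟩
  · rintro ⟨h1, h2 | h2⟩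
    · exact ⟨h1, h2, Finset.notMem_empty x, Finset.notMem_empty y⟩
    · rw [Sym2.eq_swap] at h2
      exact ⟨h1, h2, Finset.notMem_empty x, Finset.notMem_empty y⟩

lemma compSize_eq (ω : Cube n) (v : Fin n) :
    compSize (SimpleGraph.fromRel (fun x w => ω s(x, w))) v
      = (RS ω (∅ : Finset (Fin n)) {v}).card := by
  classical
  have hRS : RS ω (∅ : Finset (Fin n)) {v}
      = Finset.univ.filter (fun x =>
          (SimpleGraph.fromRel (fun x w => ω s(x, w))).Reachable v x) := by
    simp only [← mask_empty ω]
    unfold RS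
    apply Finset.filter_congr
    intro x _
    simp
  rw [hRS, compSize, Nat.card_eq_fintype_card, Fintype.card_subtype]

lemma gnp_univ {p : ℝ} (hp0 : 0 ≤ p) (hp1 : p ≤ 1) :
    gnp n p (Set.univ : Set (SimpleGraph (Fin n))) = 1 := by
  rw [gnp_apply, Set.preimage_univ]
  have h : (Set.univ : Set (Cube n)) = ↑(Finset.univ : Finset (Cube n)) := by simp
  rw [h, pi_finset_apply hp0 hp1, sum_W_univ, ENNReal.ofReal_one]

lemma gnp_comp_event {p : ℝ} (hp0 : 0 ≤ p) (hp1 : p ≤ 1) (v : Fin n) (Lv : ℕ)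
    (hL1 : 1 ≤ Lv) :
    gnp n p {G | Lv ≤ compSize G v}
      = ENNReal.ofReal (1 - ∑ ω ∈ badF (∅ : Finset (Fin n)) {v} (Lv - 1), W p ω) := by
  classical
  rw [gnp_apply]
  have hpre : ((fun ω : Cube n => SimpleGraph.fromRel (fun x w => ω s(x, w))) ⁻¹'
        {G | Lv ≤ compSize G v})
      = ↑((Finset.univ : Finset (Cube n)) \ badF (∅ : Finset (Fin n)) {v} (Lv - 1)) := by
    ext ω
    simp only [Set.mem_preimage, Set.mem_setOf_eq, Finset.coe_sdiff, Set.mem_diff,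
      Finset.coe_univ, Set.mem_univ, true_and, Finset.mem_coe]
    rw [compSize_eq, mem_badF, Finset.card_singleton]
    omega
  rw [hpre, pi_finset_apply hp0 hp1]
  congr 1
  rw [Finset.sum_sdiff_eq_sub (Finset.subset_univ _), sum_W_univ]

lemma numBig_eq_sum (G : SimpleGraph (Fin n)) (L : ℕ) :
    numBig G L = ∑ v : Fin n, if L ≤ compSize G v then 1 else 0 := by
  classical
  rw [numBig, Nat.card_eq_fintype_card, Fintype.card_subtype, Finset.card_filter]

lemma lintegral_numBig (p : ℝ) (L : ℕ) :
    ∫⁻ G, (numBig G L : ENNReal) ∂(gnp n p)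
      = ∑ v : Fin n, gnp n p {G | L ≤ compSize G v} := by
  classical
  have h : ∀ G : SimpleGraph (Fin n), (numBig G L : ENNReal)
      = ∑ v : Fin n, Set.indicator {G' | L ≤ compSize G' v} (fun _ => 1) G := by
    intro G
    rw [numBig_eq_sum]
    push_cast
    apply Finset.sum_congr rfl
    intro v _
    rw [Set.indicator_apply]
    simp only [Set.mem_setOf_eq]
  calc ∫⁻ G, (numBig G L : ENNReal) ∂(gnp n p)
      = ∫⁻ G, ∑ v : Fin n, Set.indicator {G' | L ≤ compSize G' v} (fun _ => 1) G
          ∂(gnp n p) := by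
        apply lintegral_congr
        exact h
    _ = ∑ v : Fin n, ∫⁻ G, Set.indicator {G' | L ≤ compSize G' v} (fun _ => 1) G
          ∂(gnp n p) := by
        apply lintegral_finset_sum
        intro v _
        exact fun s _ => MeasurableSpace.measurableSet_top
    _ = ∑ v : Fin n, gnp n p {G | L ≤ compSize G v} := by
        apply Finset.sum_congr rfl
        intro v _
        rw [lintegral_indicator MeasurableSpace.measurableSet_top]
        simp


/-! ### Analytic estimates -/

lemma exp_neg_le {u : ℝ} (h0 : 0 ≤ u) (h1 : u ≤ 1) :
    Real.exp (-u) ≤ 1 - u + u ^ 2 / 2 + u ^ 3 := by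
  have habs : |(-u)| = u := by rw [abs_neg, abs_of_nonneg h0]
  have hb := Real.exp_bound (x := -u) (by rw [habs]; exact h1) (n := 3) (by norm_num)
  have hsum : ∑ m ∈ Finset.range 3, (-u) ^ m / (Nat.factorial m : ℝ)
      = 1 - u + u ^ 2 / 2 := by
    rw [Finset.sum_range_succ, Finset.sum_range_succ, Finset.sum_range_succ,
      Finset.sum_range_zero]
    norm_num [Nat.factorial]
    ring
  rw [hsum, habs] at hb
  have hfac : ((Nat.factorial 3 : ℕ) : ℝ) = 6 := by norm_num [Nat.factorial]
  rw [hfac] at hb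
  have h2 := (abs_le.mp hb).2
  have h3 : u ^ 3 * (4 / (6 * 3)) ≤ u ^ 3 := by nlinarith [pow_nonneg h0 3]
  have h4 : ((3:ℕ).succ : ℝ) = 4 := by norm_num
  rw [h4] at h2
  linarith

lemma sq_one_add_le {e : ℝ} (h0 : 0 < e) (h1 : e ≤ 1) : (1+e)^2 ≤ 1 + 3*e := by nlinarith

lemma cube_le {u s : ℝ} (hu0 : 0 ≤ u) (hus : u ≤ 2*s) : u^3 ≤ 8*s^3 := by
  have h1 : u^3 ≤ (2*s)^3 := by
    apply pow_le_pow_left₀ hu0 hus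
  nlinarith [h1]

lemma sq_le' {u s e : ℝ} (hu0 : 0 ≤ u) (hus : u ≤ (1+e)*s) (hs : 0 ≤ s)
    (he : 0 ≤ e) (h1 : e ≤ 1) : u^2 ≤ s^2*(1+3*e) := by
  have h2 : u^2 ≤ ((1+e)*s)^2 := by
    apply pow_le_pow_left₀ hu0 hus
  have h3 : ((1+e)*s)^2 = s^2 * (1+e)^2 := by ring
  have h4 : (1+e)^2 ≤ 1+3*e := by nlinarith
  have h5 : s^2 * (1+e)^2 ≤ s^2 * (1+3*e) :=
    mul_le_mul_of_nonneg_left h4 (sq_nonneg s)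
  linarith

lemma fin_poly {e d : ℝ} (hδ0 : 0 < d) (hδ1 : d ≤ 1/2) (hε0 : 0 < e) (hεs : e ≤ d/200) :
    ((2-d)*e) * (1 + 3*e) / 2 + 8 * ((2-d)*e)^2 ≤ e*(1-d/50) := by
  nlinarith [mul_nonneg hε0.le (by linarith : (0:ℝ) ≤ d - 200*e), sq_nonneg e,
    mul_nonneg hδ0.le hε0.le, mul_nonneg (mul_nonneg hδ0.le hε0.le) hε0.le,
    mul_nonneg (mul_nonneg hε0.le hε0.le) hε0.le,
    mul_nonneg (mul_nonneg hδ0.le hδ0.le) hε0.le,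
    mul_nonneg (mul_nonneg (mul_nonneg hδ0.le hδ0.le) hε0.le) hε0.le]

lemma hy_verified (nn Ln : ℕ) (ε δ : ℝ) (hδ0 : 0 < δ) (hδ1 : δ ≤ 1/2)
    (hε0 : 0 < ε) (hεs : ε ≤ δ/200) (hLs : (Ln : ℝ) * 100 ≤ δ * ε * nn)
    (hn : 2 ≤ nn) :
    ∀ m : ℕ, nn - Ln ≤ m →
      ((1 - (1+ε)/nn) + ((1+ε)/nn) * (1 - (2-δ)*ε)) ^ m ≤ 1 - (2-δ)*ε := by
  have hnnR : (0:ℝ) < nn := by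
    have : (2:ℝ) ≤ nn := by exact_mod_cast hn
    linarith
  set p : ℝ := (1+ε)/nn with hpdef
  set s : ℝ := (2-δ)*ε with hsdef
  have hε1 : ε ≤ 1/400 := by linarith
  have hs0 : 0 < s := by
    apply mul_pos _ hε0
    linarith
  have hs1 : s ≤ 2*ε := by nlinarith
  have hs2 : s ≤ 1/200 := by linarith
  have hp0 : 0 ≤ p := by positivity
  have hp1 : p ≤ 1 := by
    rw [hpdef, div_le_one hnnR]
    have : (2:ℝ) ≤ nn := by exact_mod_cast hn
    linarith
  have hbase : (1 - p) + p * (1 - s) = 1 - p * s := by ring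
  have hps0 : 0 ≤ p * s := mul_nonneg hp0 hs0.le
  have hps1 : p * s ≤ 1 := by nlinarith
  have hbase0 : 0 ≤ 1 - p * s := by linarith
  have hbase1 : 1 - p * s ≤ 1 := by linarith
  have hLn0 : (0:ℝ) ≤ (Ln:ℝ) := Nat.cast_nonneg Ln
  have hδε : δ * ε * nn ≥ 0 := by positivity
  have hLnn : (Ln : ℝ) ≤ nn := by nlinarith
  have hLnat : Ln ≤ nn := by exact_mod_cast hLnn
  intro m hm
  rw [hbase]
  refine le_trans (pow_le_pow_of_le_one hbase0 hbase1 hm) ?_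
  set k : ℕ := nn - Ln with hkdef
  have hkR : (k : ℝ) = (nn : ℝ) - Ln := by
    rw [hkdef]
    exact Nat.cast_sub hLnat
  set u : ℝ := p * s * k with hudef
  have hpnn : p * (nn : ℝ) = 1 + ε := div_mul_cancel₀ _ (ne_of_gt hnnR)
  have hu_nn : u * nn = (1+ε) * s * (k:ℝ) := by
    rw [hudef, show p * s * (k:ℝ) * (nn:ℝ) = (p * (nn:ℝ)) * (s * k) by ring, hpnn]
    ring
  have hk0 : (0:ℝ) ≤ (k:ℝ) := Nat.cast_nonneg k
  have hkle : (k:ℝ) ≤ nn := by rw [hkR]; linarith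
  have hu0 : 0 ≤ u := by
    rw [hudef]
    exact mul_nonneg (mul_nonneg hp0 hs0.le) hk0
  have hu_le : u ≤ (1+ε) * s := by
    have h' : u * nn ≤ ((1+ε) * s) * nn := by
      rw [hu_nn]
      have : (0:ℝ) ≤ (1+ε) * s := by positivity
      exact mul_le_mul_of_nonneg_left hkle this
    exact le_of_mul_le_mul_right h' hnnR
  have hu2s : u ≤ 2 * s := by nlinarith
  have hu1 : u ≤ 1 := by linarith
  have step2 : (1 - p * s) ^ k ≤ Real.exp (-u) := by
    have h1 : 1 - p * s ≤ Real.exp (-(p * s)) := by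
      have := Real.add_one_le_exp (-(p * s))
      linarith
    calc (1 - p * s) ^ k ≤ (Real.exp (-(p * s))) ^ k := pow_le_pow_left₀ hbase0 h1 k
      _ = Real.exp ((k:ℝ) * (-(p * s))) := (Real.exp_nat_mul _ k).symm
      _ = Real.exp (-u) := by rw [show (k:ℝ) * (-(p * s)) = -u by rw [hudef]; ring]
  refine le_trans step2 (le_trans (exp_neg_le hu0 hu1) ?_)
  -- final polynomial inequality: 1 - u + u²/2 + u³ ≤ 1 - s
  have hu_ge : u - s ≥ s * ε * (1 - δ/50) := by
    have h1 : (u - s) * nn = s * ((1+ε) * (k:ℝ) - nn) := by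
      rw [sub_mul, hu_nn]
      ring
    have h2 : (1+ε) * (k:ℝ) - nn = ε * nn - (1+ε) * Ln := by
      rw [hkR]
      ring
    have hm1 : (1+ε) * (Ln:ℝ) ≤ 2 * Ln :=
      mul_le_mul_of_nonneg_right (by linarith) hLn0
    have h3 : ε * (nn:ℝ) - (1+ε) * Ln ≥ ε * nn - 2 * Ln := by linarith
    have h4 : ε * (nn:ℝ) - 2 * (Ln:ℝ) ≥ ε * nn * (1 - δ/50) := by
      have hexp : ε * (nn:ℝ) * (1 - δ/50) = ε * nn - (δ * ε * nn)/50 := by ring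
      rw [hexp]
      linarith
    have h5 : (u - s) * nn ≥ (s * ε * (1 - δ/50)) * nn := by
      rw [h1, h2]
      have h6 : s * (ε * nn - (1+ε) * Ln) ≥ s * (ε * nn * (1 - δ/50)) := by
        apply mul_le_mul_of_nonneg_left _ hs0.le
        linarith
      linarith [h6]
    exact le_of_mul_le_mul_right h5 hnnR
  have hu2 : u^2 ≤ s^2 * (1 + 3*ε) := sq_le' hu0 hu_le hs0.le hε0.le (by linarith)
  have hu3 : u^3 ≤ 8 * s^3 := cube_le hu0 hu2s
  have hfin : s * (1 + 3*ε) / 2 + 8 * s^2 ≤ ε * (1 - δ/50) := by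
    rw [hsdef]
    exact fin_poly hδ0 hδ1 hε0 hεs
  have hq : u^2/2 + u^3 ≤ s * (ε * (1 - δ/50)) := by
    have e3 : s^2 * (1+3*ε) / 2 + 8*s^3 = s * (s * (1+3*ε)/2 + 8*s^2) := by ring
    have e4 : s * (s * (1+3*ε)/2 + 8*s^2) ≤ s * (ε * (1-δ/50)) :=
      mul_le_mul_of_nonneg_left hfin hs0.le
    linarith [e4]
  linarith [hu_ge, hq]


lemma key_bound {n : ℕ} (v : Fin n) (Ln : ℕ) (ε δ : ℝ) (hδ0 : 0 < δ) (hδ1 : δ ≤ 1/2)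
    (hε0 : 0 < ε) (hεs : ε ≤ δ/200) (hLs : (Ln : ℝ) * 100 ≤ δ * ε * n)
    (hn : 2 ≤ n) :
    (2 - δ) * ε ≤ (gnp n ((1 + ε)/n) {G | Ln ≤ compSize G v}).toReal := by
  classical
  have hnnR : (0:ℝ) < n := by
    have : (2:ℝ) ≤ n := by exact_mod_cast hn
    linarith
  have hp0 : 0 ≤ (1 + ε)/(n:ℝ) := by positivity
  have hp1 : (1 + ε)/(n:ℝ) ≤ 1 := by
    rw [div_le_one hnnR]
    have : (2:ℝ) ≤ n := by exact_mod_cast hn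
    linarith
  have hs0 : 0 < (2 - δ) * ε := by
    apply mul_pos _ hε0
    linarith
  have hs2 : (2 - δ) * ε ≤ 1/100 := by nlinarith
  rcases Nat.eq_zero_or_pos Ln with rfl | hL1
  · have hset : {G : SimpleGraph (Fin n) | 0 ≤ compSize G v} = Set.univ := by
      ext G
      simp
    rw [hset, gnp_univ hp0 hp1, ENNReal.toReal_one]
    linarith
  · have hy := hy_verified n Ln ε δ hδ0 hδ1 hε0 hεs hLs hn
    have hmaster := master (n := n) ((1 + ε)/(n:ℝ)) (1 - (2-δ)*ε) hp0 hp1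
      (by linarith) (by linarith) Ln hy ((Ln - 1) * (n+1) + 1) (Ln - 1)
      {v} (∅ : Finset (Fin n)) (by rw [Finset.card_singleton])
      (Finset.disjoint_empty_right _)
      (by rw [Finset.card_singleton, Finset.card_empty]; omega)
    rw [Finset.card_singleton, pow_one] at hmaster
    rw [gnp_comp_event hp0 hp1 v Ln hL1, ENNReal.toReal_ofReal (by linarith)]
    linarith

end Stmt14Aux

open Stmt14Aux in
/-- Let `p = (1+ε)/n` with `ε → 0` and `ε³n → ∞`, and let `L = o(εn)`. Then for a fixed
vertex `v`, `Pr(|C_v| ≥ L) ≥ (2 + o(1))ε`; equivalently, the expected number of vertices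
in components of size at least `L` is at least `(2 + o(1))εn`. -/
theorem stmt14 (ε : ℕ → ℝ) (L : ℕ → ℕ)
    (hεpos : ∀ n, 0 < ε n)
    (hε0 : Tendsto ε atTop (nhds 0))
    (hε3 : Tendsto (fun n => ε n ^ 3 * n) atTop atTop)
    (hL : Tendsto (fun n => (L n : ℝ) / (ε n * n)) atTop (nhds 0)) :
    ∃ c : ℕ → ℝ, Tendsto c atTop (nhds 0) ∧ ∀ n, 0 < n →
      (∀ v : Fin n,
        (2 + c n) * ε n ≤
          (gnp n ((1 + ε n) / n) {G | L n ≤ compSize G v}).toReal) ∧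
      (2 + c n) * ε n * n ≤
        (∫⁻ G, (numBig G (L n) : ENNReal) ∂(gnp n ((1 + ε n) / n))).toReal := by
  classical
  set c : ℕ → ℝ := fun n =>
    if h : 0 < n then
      min 0 ((Finset.univ.inf' ⟨⟨0, h⟩, Finset.mem_univ _⟩
        (fun v : Fin n =>
          (gnp n ((1 + ε n) / n) {G | L n ≤ compSize G v}).toReal / ε n - 2)))
    else 0 with hcdef
  have hc_le : ∀ n, ∀ hn : 0 < n, ∀ v : Fin n,
      c n ≤ (gnp n ((1 + ε n) / n) {G | L n ≤ compSize G v}).toReal / ε n - 2 := by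
    intro n hn v
    rw [hcdef]
    simp only
    rw [dif_pos hn]
    exact le_trans (min_le_right _ _) (Finset.inf'_le _ (Finset.mem_univ v))
  have hpart1 : ∀ n, 0 < n → ∀ v : Fin n,
      (2 + c n) * ε n ≤ (gnp n ((1 + ε n) / n) {G | L n ≤ compSize G v}).toReal := by
    intro n hn v
    have h := hc_le n hn v
    have hεn := hεpos n
    have h2 : 2 + c n ≤ (gnp n ((1 + ε n) / n) {G | L n ≤ compSize G v}).toReal / ε n := by
      linarith
    calc (2 + c n) * ε n
        ≤ ((gnp n ((1 + ε n) / n) {G | L n ≤ compSize G v}).toReal / ε n) * ε n :=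
          mul_le_mul_of_nonneg_right h2 hεn.le
      _ = (gnp n ((1 + ε n) / n) {G | L n ≤ compSize G v}).toReal :=
          div_mul_cancel₀ _ (ne_of_gt hεn)
  refine ⟨c, ?_, ?_⟩
  · -- Tendsto c atTop (nhds 0)
    rw [Metric.tendsto_atTop]
    intro δ hδ
    set δ' : ℝ := min (δ/2) (1/2) with hδ'def
    have hδ'0 : 0 < δ' := lt_min (by linarith) (by norm_num)
    have hδ'1 : δ' ≤ 1/2 := min_le_right _ _
    have hδ'2 : δ' ≤ δ/2 := min_le_left _ _
    have E1 : ∀ᶠ m in atTop, ε m < δ'/200 := hε0.eventually_lt_const (by positivity)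
    have E2 : ∀ᶠ m in atTop, (L m : ℝ)/(ε m * m) < δ'/400 :=
      hL.eventually_lt_const (by positivity)
    have E3 : ∀ᶠ m in atTop, 2 ≤ m := eventually_ge_atTop 2
    have E := (E1.and (E2.and E3))
    rw [eventually_atTop] at E
    obtain ⟨N, hN⟩ := E
    refine ⟨N, fun m hm => ?_⟩
    obtain ⟨h1, h2, h3⟩ := hN m hm
    have hm0 : 0 < m := by omega
    have hmR : (2:ℝ) ≤ m := by exact_mod_cast h3
    have hden : (0:ℝ) < ε m * m := by
      apply mul_pos (hεpos m)
      linarith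
    have hLs : (L m : ℝ) * 100 ≤ δ' * ε m * m := by
      rw [div_lt_iff₀ hden] at h2
      have hnn : (0:ℝ) ≤ δ' * (ε m * m) := by positivity
      nlinarith
    have hkey : ∀ v : Fin m,
        (2 - δ') * ε m ≤ (gnp m ((1 + ε m)/m) {G | L m ≤ compSize G v}).toReal :=
      fun v => key_bound v (L m) (ε m) δ' hδ'0 hδ'1 (hεpos m) (by linarith) hLs h3
    have hc0 : c m ≤ 0 := by
      rw [hcdef]
      simp only
      rw [dif_pos hm0]
      exact min_le_left _ _
    have hcl : -δ' ≤ c m := by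
      rw [hcdef]
      simp only
      rw [dif_pos hm0]
      apply le_min (by linarith)
      apply Finset.le_inf'
      intro v _
      have hv := hkey v
      have hεm := hεpos m
      have hdiv : (2 - δ') ≤
          (gnp m ((1 + ε m)/m) {G | L m ≤ compSize G v}).toReal / ε m := by
        rw [le_div_iff₀ hεm]
        linarith
      linarith
    rw [Real.dist_eq, sub_zero]
    have habs : |c m| ≤ δ' := abs_le.mpr ⟨by linarith, by linarith⟩
    linarith
  · -- the two inequalities for every n
    intro n hn
    refine ⟨hpart1 n hn, ?_⟩
    rw [lintegral_numBig]
    have hfin : ∀ v : Fin n, gnp n ((1 + ε n) / n) {G | L n ≤ compSize G v} ≠ ⊤ := by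
      intro v
      rw [gnp_apply]
      exact measure_ne_top _ _
    rw [ENNReal.toReal_sum (fun v _ => hfin v)]
    calc (2 + c n) * ε n * n
        = ∑ _v : Fin n, (2 + c n) * ε n := by
          rw [Finset.sum_const, Finset.card_univ, Fintype.card_fin, nsmul_eq_mul]
          ring
      _ ≤ ∑ v : Fin n, (gnp n ((1 + ε n) / n) {G | L n ≤ compSize G v}).toReal :=
          Finset.sum_le_sum (fun v _ => hpart1 n hn v)
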